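/- arXiv:2505.13732 — 6 statements merged into one kernel-verified Lean document; each statement's English description precedes it below -/
import Mathlib

section
/- Let Z₁, …, Zₙ, Z_{n+1} be exchangeable real-valued random variables with each Zᵢ ∈ [S_min, S_max] and 0 < S_min ≤ S_max. Define E = Z_{n+1} / ((1/(n+1)) · (Z₁ + ⋯ + Zₙ + Z_{n+1})). Then E is nonnegative and 𝔼[E] = 1; in particular E is an e-variable. -/
/-!
Write `Sᵢ = Zᵢ / (Z₁ + ⋯ + Z_{n+1})` for the share of the `i`-th score. The shares lie in `[0, 1]`
and sum to `1` pointwise; exchangeability gives them all the same expectation, which is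
therefore `1 / (n + 1)`. The e-variable is `(n + 1) · S_{n+1}`.
-/

open MeasureTheory ProbabilityTheory

section Share

variable {ι : Type*} [Fintype ι]

noncomputable def share (x : ι → ℝ) (j : ι) : ℝ := x j / ∑ i, x i

lemma share_nonneg {x : ι → ℝ} (hx : ∀ i, 0 ≤ x i) (j : ι) : 0 ≤ share x j :=
  div_nonneg (hx j) (Finset.sum_nonneg fun i _ => hx i)

lemma share_le_one {x : ι → ℝ} (hx : ∀ i, 0 ≤ x i) (j : ι) : share x j ≤ 1 :=
  div_le_one_of_le₀ (Finset.single_le_sum (fun i _ => hx i) (Finset.mem_univ j))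
    (Finset.sum_nonneg fun i _ => hx i)

lemma sum_share {x : ι → ℝ} (hx : ∑ i, x i ≠ 0) : ∑ j, share x j = 1 := by
  simp only [share]
  rw [← Finset.sum_div, div_self hx]

lemma share_comp_perm (x : ι → ℝ) (π : Equiv.Perm ι) (j : ι) :
    share (x ∘ π) j = share x (π j) := by
  simp only [share, Function.comp_apply, Equiv.sum_comp π x]

lemma measurable_share (j : ι) : Measurable fun x : ι → ℝ => share x j :=
  (measurable_pi_apply j).div (Finset.measurable_sum _ fun i _ => measurable_pi_apply i)

end Share

section Exchangeable

variable {ι Ω : Type*} [MeasurableSpace Ω]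

def Exchangeable {E : Type*} [MeasurableSpace E] (Z : ι → Ω → E) (μ : Measure Ω) : Prop :=
  ∀ π : Equiv.Perm ι, Measure.map (fun ω i => Z (π i) ω) μ = Measure.map (fun ω i => Z i ω) μ

lemma Exchangeable.integral_comp_perm {E : Type*} [MeasurableSpace E] {Z : ι → Ω → E}
    {μ : Measure Ω} (hZ : Exchangeable Z μ) (hmeas : ∀ i, Measurable (Z i))
    {g : (ι → E) → ℝ} (hg : Measurable g) (π : Equiv.Perm ι) :
    ∫ ω, g (fun i => Z (π i) ω) ∂μ = ∫ ω, g (fun i => Z i ω) ∂μ := by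
  have hmeas_perm : Measurable fun ω i => Z (π i) ω := measurable_pi_lambda _ fun i => hmeas (π i)
  have hmeas_id : Measurable fun ω i => Z i ω := measurable_pi_lambda _ hmeas
  rw [← integral_map hmeas_perm.aemeasurable hg.aestronglyMeasurable,
    ← integral_map hmeas_id.aemeasurable hg.aestronglyMeasurable, hZ π]

lemma Exchangeable.integral_share_eq [Fintype ι] [DecidableEq ι] {Z : ι → Ω → ℝ} {μ : Measure Ω}
    (hZ : Exchangeable Z μ) (hmeas : ∀ i, Measurable (Z i)) (i j : ι) :
    ∫ ω, share (Z · ω) i ∂μ = ∫ ω, share (Z · ω) j ∂μ := by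
  have hswap : ∀ ω, share (fun k => Z (Equiv.swap i j k) ω) j = share (Z · ω) i := fun ω =>
    (share_comp_perm (Z · ω) (Equiv.swap i j) j).trans (congrArg _ (Equiv.swap_apply_right i j))
  simpa only [hswap] using hZ.integral_comp_perm hmeas (measurable_share j) (Equiv.swap i j)

end Exchangeable

lemma integral_eq_div_card_of_sum_eq {ι Ω : Type*} [Fintype ι] [MeasurableSpace Ω]
    {μ : Measure Ω} [IsProbabilityMeasure μ] {f : ι → Ω → ℝ} {c : ℝ}
    (hint : ∀ i, Integrable (f i) μ) (heq : ∀ i j, ∫ ω, f i ω ∂μ = ∫ ω, f j ω ∂μ)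
    (hsum : ∀ ω, ∑ i, f i ω = c) (j : ι) :
    ∫ ω, f j ω ∂μ = c / Fintype.card ι := by
  have : Nonempty ι := ⟨j⟩
  have hcard : (Fintype.card ι : ℝ) ≠ 0 := Nat.cast_ne_zero.mpr Fintype.card_ne_zero
  have htotal : ∑ i, ∫ ω, f i ω ∂μ = c := by
    simp [← integral_finsetSum _ fun i _ => hint i, hsum]
  rw [eq_div_iff hcard, ← htotal, Finset.sum_congr rfl fun i _ => heq i j]
  simp [mul_comm]

lemma Exchangeable.integral_share {ι Ω : Type*} [Fintype ι] [MeasurableSpace Ω]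
    {μ : Measure Ω} [IsProbabilityMeasure μ] {Z : ι → Ω → ℝ} (hZ : Exchangeable Z μ)
    (hmeas : ∀ i, Measurable (Z i)) (hpos : ∀ i ω, 0 < Z i ω) (j : ι) :
    ∫ ω, share (Z · ω) j ∂μ = 1 / Fintype.card ι := by
  classical
  have hnonneg : ∀ ω i, 0 ≤ Z i ω := fun ω i => (hpos i ω).le
  have hint : ∀ i, Integrable (fun ω => share (Z · ω) i) μ := fun i =>
    (integrable_const (1 : ℝ)).mono'
      ((measurable_share i).comp (measurable_pi_lambda _ hmeas)).aestronglyMeasurable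
      (ae_of_all _ fun ω => by
        rw [Real.norm_of_nonneg (share_nonneg (hnonneg ω) i)]
        exact share_le_one (hnonneg ω) i)
  have hsum : ∀ ω, ∑ i, share (Z · ω) i = 1 := fun ω =>
    sum_share (Finset.sum_pos (fun i _ => hpos i ω) ⟨j, Finset.mem_univ j⟩).ne'
  exact integral_eq_div_card_of_sum_eq hint (hZ.integral_share_eq hmeas) hsum j

theorem exchangeable_score_ratio_is_e_variable_general
    {Ω : Type*} [MeasureSpace Ω] [IsProbabilityMeasure (ℙ : Measure Ω)]
    (n : ℕ) (Z : Fin (n + 1) → Ω → ℝ) (hmeas : ∀ i, Measurable (Z i))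
    (Smin Smax : ℝ) (hmin : 0 < Smin)
    (hbdd : ∀ i ω, Z i ω ∈ Set.Icc Smin Smax)
    (hexch : ∀ π : Equiv.Perm (Fin (n + 1)),
      Measure.map (fun ω => fun i => Z (π i) ω) ℙ =
        Measure.map (fun ω => fun i => Z i ω) ℙ) :
    (∀ ω, 0 ≤ Z (Fin.last n) ω / ((1 / (n + 1 : ℝ)) * ∑ i, Z i ω)) ∧
    ∫ ω, Z (Fin.last n) ω / ((1 / (n + 1 : ℝ)) * ∑ i, Z i ω) = 1 := by
  have hpos : ∀ i ω, 0 < Z i ω := fun i ω => hmin.trans_le (hbdd i ω).1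
  have hratio : ∀ ω, Z (Fin.last n) ω / ((1 / (n + 1 : ℝ)) * ∑ i, Z i ω) =
      (n + 1 : ℝ) * share (Z · ω) (Fin.last n) := fun ω => by
    rw [share]
    field_simp
  simp only [hratio]
  refine ⟨fun ω => mul_nonneg (by positivity) (share_nonneg (fun i => (hpos i ω).le) _), ?_⟩
  rw [integral_const_mul, Exchangeable.integral_share hexch hmeas hpos, Fintype.card_fin]
  push_cast
  field_simp

theorem exchangeable_score_ratio_is_e_variable
    {Ω : Type*} [MeasureSpace Ω] [IsProbabilityMeasure (ℙ : Measure Ω)]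
    (n : ℕ) (Z : Fin (n + 1) → Ω → ℝ) (hmeas : ∀ i, Measurable (Z i))
    (Smin Smax : ℝ) (hmin : 0 < Smin) (hmm : Smin ≤ Smax)
    (hbdd : ∀ i ω, Z i ω ∈ Set.Icc Smin Smax)
    (hexch : ∀ π : Equiv.Perm (Fin (n + 1)),
      Measure.map (fun ω => fun i => Z (π i) ω) ℙ =
        Measure.map (fun ω => fun i => Z i ω) ℙ) :
    (∀ ω, 0 ≤ Z (Fin.last n) ω / ((1 / (n + 1 : ℝ)) * ∑ i, Z i ω)) ∧
    ∫ ω, Z (Fin.last n) ω / ((1 / (n + 1 : ℝ)) * ∑ i, Z i ω) = 1 :=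
  exchangeable_score_ratio_is_e_variable_general n Z hmeas Smin Smax hmin hbdd hexch
end

section
/- Let Z₁, …, Z_{n+1} be exchangeable random variables taking values in a measurable space 𝒵, and let S: 𝒵 → [S_min, S_max] with 0 < S_min ≤ S_max. Let α̃ be any (0,1)-valued random variable measurable with respect to (Z₁, …, Z_{n+1}) (or any other σ-algebra). Define the event A = {S(Z_{n+1}) / ((1/(n+1)) · Σ_{i=1}^{n+1} S(Zᵢ)) ≥ 1/α̃}. Then 𝔼[ ℙ(A | α̃) / α̃ ] ≤ 1. -/
/-!
Write `E = S(Z_{n+1}) / ((1/(n+1)) ∑ᵢ S(Zᵢ))`. By exchangeability the ratios `S(Zⱼ) / ∑ᵢ S(Zᵢ)`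
all have the same mean, and they sum to `1`, so `𝔼[E] = 1`: `E` is an e-variable. Since `α̃` is
`m`-measurable it can be pulled into the conditional expectation, which reduces the claim to
`𝔼[α̃⁻¹ 1{E ≥ 1/α̃}] ≤ 𝔼[E]`, and that holds pointwise.
-/

open MeasureTheory ProbabilityTheory

section PostHoc

variable {Ω : Type*} {m m₀ : MeasurableSpace Ω} {μ : Measure Ω}

theorem integral_mul_condExp_of_aestronglyMeasurable (hm : m ≤ m₀) [SigmaFinite (μ.trim hm)]
    {f g : Ω → ℝ} (hg : AEStronglyMeasurable[m] g μ) (hgf : Integrable (g * f) μ)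
    (hf : Integrable f μ) :
    ∫ ω, g ω * μ[f | m] ω ∂μ = ∫ ω, g ω * f ω ∂μ :=
  calc ∫ ω, g ω * μ[f | m] ω ∂μ = ∫ ω, μ[g * f | m] ω ∂μ :=
        integral_congr_ae (condExp_mul_of_aestronglyMeasurable_left hg hgf hf).symm
    _ = ∫ ω, g ω * f ω ∂μ := integral_condExp hm

theorem inv_mul_ite_le {a e : ℝ} (he : 0 ≤ e) :
    a⁻¹ * (if 1 / a ≤ e then (1 : ℝ) else 0) ≤ e := by
  split_ifs with h
  · simpa using h
  · simpa using he

theorem integral_condExp_indicator_div_le [IsFiniteMeasure μ] (hm : m ≤ m₀) {α E : Ω → ℝ}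
    (hα : ∀ ω, 0 ≤ α ω) (hαm : Measurable[m] α) (hE : ∀ ω, 0 ≤ E ω) (hEm : Measurable E)
    (hEi : Integrable E μ) :
    ∫ ω, μ[{ω | 1 / α ω ≤ E ω}.indicator (fun _ => (1 : ℝ)) | m] ω / α ω ∂μ ≤ ∫ ω, E ω ∂μ := by
  set A := {ω | 1 / α ω ≤ E ω}
  have hA : MeasurableSet A := measurableSet_le (measurable_const.div (hαm.mono hm le_rfl)) hEm
  have h1A : Integrable (A.indicator fun _ => (1 : ℝ)) μ := (integrable_const 1).indicator hA
  have hbound : ∀ ω, (α ω)⁻¹ * A.indicator (fun _ => (1 : ℝ)) ω ≤ E ω := fun ω => by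
    simpa only [Set.indicator_apply, A, Set.mem_ofPred_eq] using inv_mul_ite_le (hE ω)
  have hnonneg : ∀ ω, 0 ≤ (α ω)⁻¹ * A.indicator (fun _ => (1 : ℝ)) ω := fun ω =>
    mul_nonneg (inv_nonneg.2 (hα ω)) (Set.indicator_nonneg (fun _ _ => zero_le_one) ω)
  have hint : Integrable (fun ω => (α ω)⁻¹ * A.indicator (fun _ => (1 : ℝ)) ω) μ :=
    hEi.mono' (((hαm.mono hm le_rfl).inv.mul (measurable_const.indicator hA)).aestronglyMeasurable)
      (.of_forall fun ω => by rw [Real.norm_of_nonneg (hnonneg ω)]; exact hbound ω)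
  calc ∫ ω, μ[A.indicator fun _ => (1 : ℝ) | m] ω / α ω ∂μ
      = ∫ ω, (α ω)⁻¹ * μ[A.indicator fun _ => (1 : ℝ) | m] ω ∂μ := by
        simp only [div_eq_inv_mul]
    _ = ∫ ω, (α ω)⁻¹ * A.indicator (fun _ => (1 : ℝ)) ω ∂μ :=
        integral_mul_condExp_of_aestronglyMeasurable hm
          hαm.inv.stronglyMeasurable.aestronglyMeasurable hint h1A
    _ ≤ ∫ ω, E ω ∂μ := integral_mono hint hEi hbound

end PostHoc

theorem div_sum_mem_Icc {𝒵 ι : Type*} [Fintype ι] {S : 𝒵 → ℝ} (hpos : ∀ z, 0 < S z)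
    (z : ι → 𝒵) (j : ι) :
    S (z j) / ∑ i, S (z i) ∈ Set.Icc 0 1 := by
  have hsum : 0 < ∑ i, S (z i) := Finset.sum_pos (fun i _ => hpos _) ⟨j, Finset.mem_univ j⟩
  exact ⟨div_nonneg (hpos _).le hsum.le, div_le_one_of_le₀
    (Finset.single_le_sum (fun i _ => (hpos (z i)).le) (Finset.mem_univ j)) hsum.le⟩

section Exchangeable

variable {Ω 𝒵 ι : Type*} [MeasurableSpace Ω] [MeasurableSpace 𝒵] {μ : Measure Ω}
  {Z : ι → Ω → 𝒵} {S : 𝒵 → ℝ}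

theorem integral_comp_perm_of_exchangeable (hZ : ∀ i, Measurable (Z i)) (π : Equiv.Perm ι)
    (hπ : μ.map (fun ω i => Z (π i) ω) = μ.map (fun ω i => Z i ω))
    {F : (ι → 𝒵) → ℝ} (hF : Measurable F) :
    ∫ ω, F (fun i => Z (π i) ω) ∂μ = ∫ ω, F (fun i => Z i ω) ∂μ :=
  ((IdentDistrib.mk (measurable_pi_lambda _ fun i => hZ (π i)).aemeasurable
    (measurable_pi_lambda _ hZ).aemeasurable hπ).comp hF).integral_eq

variable [Fintype ι]

theorem measurable_div_sum (hZ : ∀ i, Measurable (Z i)) (hS : Measurable S) (j : ι) :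
    Measurable fun ω => S (Z j ω) / ∑ i, S (Z i ω) :=
  (hS.comp (hZ j)).div (Finset.measurable_sum _ fun i _ => hS.comp (hZ i))

theorem integrable_div_sum [IsFiniteMeasure μ] (hZ : ∀ i, Measurable (Z i)) (hS : Measurable S)
    (hpos : ∀ z, 0 < S z) (j : ι) :
    Integrable (fun ω => S (Z j ω) / ∑ i, S (Z i ω)) μ :=
  .of_bound (measurable_div_sum hZ hS j).aestronglyMeasurable 1 (.of_forall fun ω => by
    obtain ⟨h0, h1⟩ := div_sum_mem_Icc hpos (fun i => Z i ω) j
    exact (Real.norm_of_nonneg h0).trans_le h1)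

theorem integral_div_sum_eq_inv_card [IsProbabilityMeasure μ] (hZ : ∀ i, Measurable (Z i))
    (hS : Measurable S) (hpos : ∀ z, 0 < S z)
    (hexch : ∀ π : Equiv.Perm ι,
      μ.map (fun ω i => Z (π i) ω) = μ.map (fun ω i => Z i ω)) (j : ι) :
    ∫ ω, S (Z j ω) / ∑ i, S (Z i ω) ∂μ = (Fintype.card ι : ℝ)⁻¹ := by
  classical
  have hequal : ∀ k,
      ∫ ω, S (Z k ω) / ∑ i, S (Z i ω) ∂μ = ∫ ω, S (Z j ω) / ∑ i, S (Z i ω) ∂μ := by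
    intro k
    have hF : Measurable fun z : ι → 𝒵 => S (z k) / ∑ i, S (z i) :=
      measurable_div_sum measurable_pi_apply hS k
    rw [← integral_comp_perm_of_exchangeable hZ (Equiv.swap k j) (hexch _) hF]
    simp only [Equiv.swap_apply_left]
    congr with ω
    rw [Equiv.sum_comp (Equiv.swap k j) fun i => S (Z i ω)]
  have hsum_one : ∀ ω, ∑ k, S (Z k ω) / ∑ i, S (Z i ω) = 1 := fun ω => by
    rw [← Finset.sum_div, div_self (Finset.sum_pos (fun i _ => hpos _) ⟨j, Finset.mem_univ j⟩).ne']
  have hcard : (Fintype.card ι : ℝ) * ∫ ω, S (Z j ω) / ∑ i, S (Z i ω) ∂μ = 1 :=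
    calc (Fintype.card ι : ℝ) * ∫ ω, S (Z j ω) / ∑ i, S (Z i ω) ∂μ
        = ∑ k, ∫ ω, S (Z k ω) / ∑ i, S (Z i ω) ∂μ := by
          simp only [hequal, Finset.sum_const, Finset.card_univ, nsmul_eq_mul]
      _ = ∫ ω, ∑ k, S (Z k ω) / ∑ i, S (Z i ω) ∂μ :=
          (integral_finsetSum _ fun k _ => integrable_div_sum hZ hS hpos k).symm
      _ = 1 := by simp only [hsum_one, integral_const, probReal_univ, smul_eq_mul, mul_one]
  exact eq_inv_of_mul_eq_one_right hcard

end Exchangeable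

theorem post_hoc_validity_conformal_general
    {Ω 𝒵 : Type*} [inst : MeasurableSpace Ω] [MeasurableSpace 𝒵]
    (μ : Measure Ω) [IsProbabilityMeasure μ]
    (n : ℕ) (Z : Fin (n + 1) → Ω → 𝒵) (hZmeas : ∀ i, Measurable (Z i))
    (S : 𝒵 → ℝ) (hSmeas : Measurable S)
    (Smin Smax : ℝ) (hmin : 0 < Smin)
    (hbdd : ∀ z, S z ∈ Set.Icc Smin Smax)
    (hexch : ∀ π : Equiv.Perm (Fin (n + 1)),
      Measure.map (fun ω => fun i => Z (π i) ω) μ =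
        Measure.map (fun ω => fun i => Z i ω) μ)
    (m : MeasurableSpace Ω) (hm : m ≤ inst)
    (alphaTilde : Ω → ℝ) (halpha : ∀ ω, alphaTilde ω ∈ Set.Ioo (0 : ℝ) 1)
    (halphameas : Measurable[m] alphaTilde) :
    ∫ ω, (μ[Set.indicator
        {ω' | 1 / alphaTilde ω' ≤
          S (Z (Fin.last n) ω') / ((1 / (n + 1 : ℝ)) * ∑ i, S (Z i ω'))}
        (fun _ => (1 : ℝ)) | m]) ω / alphaTilde ω ∂μ ≤ 1 := by
  -- `m` is a local instance too; make `inst` the ambient σ-algebra.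
  let := inst
  have hpos : ∀ z, 0 < S z := fun z => hmin.trans_le (hbdd z).1
  have hE : ∀ ω, S (Z (Fin.last n) ω) / ((1 / (n + 1 : ℝ)) * ∑ i, S (Z i ω))
      = (n + 1 : ℝ) * (S (Z (Fin.last n) ω) / ∑ i, S (Z i ω)) := fun ω => by
    rw [div_mul_eq_div_div, one_div, div_inv_eq_mul, mul_div_right_comm, mul_comm]
  have hEi := (integrable_div_sum (μ := μ) hZmeas hSmeas hpos (Fin.last n)).const_mul (n + 1 : ℝ)
  calc _ ≤ ∫ ω, S (Z (Fin.last n) ω) / ((1 / (n + 1 : ℝ)) * ∑ i, S (Z i ω)) ∂μ := by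
        refine integral_condExp_indicator_div_le hm (fun ω => (halpha ω).1.le) halphameas
          (fun ω => ?_) ?_ ?_
        · rw [hE]
          exact mul_nonneg (by positivity) (div_sum_mem_Icc hpos (fun i => Z i ω) _).1
        · simpa only [hE] using (measurable_div_sum hZmeas hSmeas _).const_mul (n + 1 : ℝ)
        · simpa only [hE] using hEi
    _ = 1 := by
        simp only [hE, integral_const_mul,
          integral_div_sum_eq_inv_card hZmeas hSmeas hpos hexch, Fintype.card_fin]
        push_cast
        exact mul_inv_cancel₀ (by positivity)

theorem post_hoc_validity_conformal
    {Ω 𝒵 : Type*} [inst : MeasurableSpace Ω] [MeasurableSpace 𝒵]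
    (μ : Measure Ω) [IsProbabilityMeasure μ]
    (n : ℕ) (Z : Fin (n + 1) → Ω → 𝒵) (hZmeas : ∀ i, Measurable (Z i))
    (S : 𝒵 → ℝ) (hSmeas : Measurable S)
    (Smin Smax : ℝ) (hmin : 0 < Smin) (hmm : Smin ≤ Smax)
    (hbdd : ∀ z, S z ∈ Set.Icc Smin Smax)
    (hexch : ∀ π : Equiv.Perm (Fin (n + 1)),
      Measure.map (fun ω => fun i => Z (π i) ω) μ =
        Measure.map (fun ω => fun i => Z i ω) μ)
    (m : MeasurableSpace Ω) (hm : m ≤ inst)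
    (alphaTilde : Ω → ℝ) (halpha : ∀ ω, alphaTilde ω ∈ Set.Ioo (0 : ℝ) 1)
    (halphameas : Measurable[m] alphaTilde) :
    ∫ ω, (μ[Set.indicator
        {ω' | 1 / alphaTilde ω' ≤
          S (Z (Fin.last n) ω') / ((1 / (n + 1 : ℝ)) * ∑ i, S (Z i ω'))}
        (fun _ => (1 : ℝ)) | m]) ω / alphaTilde ω ∂μ ≤ 1 :=
  post_hoc_validity_conformal_general (inst := inst) μ n Z hZmeas S hSmeas Smin Smax hmin hbdd hexch
    m hm alphaTilde halpha halphameas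
end

section
/- Let 𝒴 be a finite set, T < |𝒴| a positive integer, and σ the bump function σ(x) = exp(-1/x) for x > 0, 0 otherwise. For λ > 0 define F_λ(E) = inf{ α ∈ (0,1) : Σ_{y∈𝒴} σ(λ(1/α − E_y)) ≤ T } and F(E) = inf{ α ∈ (0,1) : #{y : E_y < 1/α} ≤ T }. Then for every E = (E_y) with 1 ≤ #{y : E_y < 1} ≤ T and E_y ≠ 1 for all y, we have F_λ(E) ≤ F(E) for all λ > 0, and F_λ(E) → F(E) as λ → ∞. -/
open scoped Classical

/-- The bump function `σ(x) = exp(-1/x)` for `x > 0` and `0` for `x ≤ 0`. -/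
noncomputable def bump : ℝ → ℝ := fun x => if 0 < x then Real.exp (-1 / x) else 0

/-- `F(E) = inf { α ∈ (0,1) : #{y : E_y < 1/α} ≤ T }`. -/
noncomputable def Fcount {𝒴 : Type*} [Fintype 𝒴] (T : ℕ) (E : 𝒴 → ℝ) : ℝ :=
  sInf {α : ℝ | α ∈ Set.Ioo (0 : ℝ) 1 ∧
    (Finset.univ.filter (fun y => E y < 1 / α)).card ≤ T}

/-- `F_λ(E) = inf { α ∈ (0,1) : Σ_y σ(λ(1/α − E_y)) ≤ T }`. -/
noncomputable def Fsmooth {𝒴 : Type*} [Fintype 𝒴] (T : ℕ) (lam : ℝ) (E : 𝒴 → ℝ) : ℝ :=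
  sInf {α : ℝ | α ∈ Set.Ioo (0 : ℝ) 1 ∧
    (∑ y, bump (lam * (1 / α - E y))) ≤ T}

/-!
For `λ ≥ 0` each term `σ(λ(1/α − E_y))` is at most the indicator of `E_y < 1/α`, so every `α`
admissible for `F` is admissible for `F_λ`, giving `F_λ ≤ F`. Conversely, if `α₀ < F(E)` then
`#{y : E_y < 1/α₀} > T`; the smooth count at `α₀` tends to this integer as `λ → ∞`, so for large
`λ` it exceeds `T`, and since the smooth count is antitone in `α`, no `α < α₀` is admissible for
`F_λ`, i.e. `α₀ ≤ F_λ(E)`. Both infima are over nonempty sets: the finitely many values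
`E_y ≠ 1` leave a gap `[1, 1/α)` for some `α < 1`, so `#{y : E_y < 1/α} = #{y : E_y < 1} ≤ T`.
-/

open Filter Topology

section Bump

lemma bump_of_pos {x : ℝ} (hx : 0 < x) : bump x = Real.exp (-1 / x) := if_pos hx

lemma bump_of_nonpos {x : ℝ} (hx : x ≤ 0) : bump x = 0 := if_neg hx.not_gt

lemma bump_nonneg (x : ℝ) : 0 ≤ bump x := by
  unfold bump; split_ifs <;> positivity

lemma bump_le_one (x : ℝ) : bump x ≤ 1 := by
  unfold bump
  split_ifs with hx
  · exact Real.exp_le_one_iff.2 (div_nonpos_of_nonpos_of_nonneg (by norm_num) hx.le)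
  · exact zero_le_one

lemma bump_mono : Monotone bump := by
  intro x y hxy
  by_cases hx : 0 < x
  · rw [bump_of_pos hx, bump_of_pos (hx.trans_le hxy), Real.exp_le_exp, neg_div, neg_div,
      neg_le_neg_iff]
    exact one_div_le_one_div_of_le hx hxy
  · exact (bump_of_nonpos (not_lt.1 hx)).trans_le (bump_nonneg y)

lemma tendsto_bump_atTop : Tendsto bump atTop (𝓝 1) := by
  have h : Tendsto (fun x : ℝ => Real.exp (-x⁻¹)) atTop (𝓝 1) := by
    have h0 : Tendsto (fun x : ℝ => -x⁻¹) atTop (𝓝 0) := by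
      simpa using (tendsto_inv_atTop_zero (𝕜 := ℝ)).neg
    simpa [Function.comp_def] using (Real.continuous_exp.tendsto 0).comp h0
  refine h.congr' ?_
  filter_upwards [eventually_gt_atTop 0] with x hx
  rw [bump_of_pos hx, neg_div, one_div]

lemma bump_mul_le_indicator {lam : ℝ} (hlam : 0 ≤ lam) (x : ℝ) :
    bump (lam * x) ≤ if 0 < x then 1 else 0 := by
  split_ifs with hx
  · exact bump_le_one _
  · exact (bump_of_nonpos (mul_nonpos_of_nonneg_of_nonpos hlam (not_lt.1 hx))).le

lemma tendsto_bump_mul (x : ℝ) :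
    Tendsto (fun lam => bump (lam * x)) atTop (𝓝 (if 0 < x then 1 else 0)) := by
  split_ifs with hx
  · exact tendsto_bump_atTop.comp (tendsto_id.atTop_mul_const hx)
  · refine tendsto_const_nhds.congr' ?_
    filter_upwards [eventually_ge_atTop 0] with lam hlam
    exact (bump_of_nonpos (mul_nonpos_of_nonneg_of_nonpos hlam (not_lt.1 hx))).symm

end Bump

section Counts

variable {𝒴 : Type*} [Fintype 𝒴] (E : 𝒴 → ℝ)

lemma sum_bump_le_card_filter {lam : ℝ} (hlam : 0 ≤ lam) (t : ℝ) :
    ∑ y, bump (lam * (t - E y)) ≤ (Finset.univ.filter (fun y => E y < t)).card := by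
  rw [← Finset.sum_boole]
  refine Finset.sum_le_sum fun y _ => ?_
  simpa only [sub_pos] using bump_mul_le_indicator hlam (t - E y)

lemma sum_bump_mono {lam : ℝ} (hlam : 0 ≤ lam) :
    Monotone fun t => ∑ y, bump (lam * (t - E y)) := fun _ _ hst =>
  Finset.sum_le_sum fun _ _ => bump_mono (by gcongr)

lemma tendsto_sum_bump (t : ℝ) :
    Tendsto (fun lam => ∑ y, bump (lam * (t - E y))) atTop
      (𝓝 (Finset.univ.filter (fun y => E y < t)).card) := by
  rw [← Finset.sum_boole]
  simpa only [sub_pos] using tendsto_finsetSum _ fun y _ => tendsto_bump_mul (t - E y)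

end Counts

section Infima

variable {𝒴 : Type*} [Fintype 𝒴] {T : ℕ} {E : 𝒴 → ℝ}

lemma exists_mem_Ioo_card_filter_le (hne : ∀ y, E y ≠ 1)
    (hhigh : (Finset.univ.filter (fun y => E y < 1)).card ≤ T) :
    ∃ α ∈ Set.Ioo (0 : ℝ) 1, (Finset.univ.filter (fun y => E y < 1 / α)).card ≤ T := by
  have hgap : (Set.range E)ᶜ ∈ 𝓝 (1 : ℝ) :=
    (Set.finite_range E).isClosed.isOpen_compl.mem_nhds fun ⟨y, hy⟩ => hne y hy
  obtain ⟨u, hu, hgap⟩ := exists_Ico_subset_of_mem_nhds hgap ⟨2, one_lt_two⟩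
  refine ⟨1 / u, ⟨one_div_pos.2 (by linarith), (div_lt_one (by linarith)).2 hu⟩,
    le_trans (Finset.card_le_card fun y => ?_) hhigh⟩
  simp only [Finset.mem_filter, Finset.mem_univ, true_and, one_div_one_div]
  intro hyu
  by_contra hy1
  exact hgap (show E y ∈ Set.Ico 1 u from ⟨not_lt.1 hy1, hyu⟩) ⟨y, rfl⟩

lemma sum_bump_le_of_card_filter_le {lam t : ℝ} (hlam : 0 ≤ lam)
    (hcard : (Finset.univ.filter (fun y => E y < t)).card ≤ T) :
    ∑ y, bump (lam * (t - E y)) ≤ T :=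
  (sum_bump_le_card_filter E hlam t).trans (by exact_mod_cast hcard)

lemma Fsmooth_nonneg (T : ℕ) (lam : ℝ) (E : 𝒴 → ℝ) : 0 ≤ Fsmooth T lam E :=
  Real.sInf_nonneg fun _ hα => hα.1.1.le

lemma Fcount_le {α : ℝ} (hα : α ∈ Set.Ioo (0 : ℝ) 1)
    (hcard : (Finset.univ.filter (fun y => E y < 1 / α)).card ≤ T) : Fcount T E ≤ α :=
  csInf_le ⟨0, fun _ h => h.1.1.le⟩ ⟨hα, hcard⟩

lemma Fcount_lt_one (hA : ∃ α ∈ Set.Ioo (0 : ℝ) 1,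
    (Finset.univ.filter (fun y => E y < 1 / α)).card ≤ T) : Fcount T E < 1 := by
  obtain ⟨α, hα, hcard⟩ := hA
  exact (Fcount_le hα hcard).trans_lt hα.2

lemma Fsmooth_le_Fcount {lam : ℝ} (hlam : 0 ≤ lam) (hA : ∃ α ∈ Set.Ioo (0 : ℝ) 1,
    (Finset.univ.filter (fun y => E y < 1 / α)).card ≤ T) : Fsmooth T lam E ≤ Fcount T E := by
  obtain ⟨α, hα, hcard⟩ := hA
  exact csInf_le_csInf ⟨0, fun _ h => h.1.1.le⟩ ⟨α, hα, hcard⟩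
    fun β hβ => ⟨hβ.1, sum_bump_le_of_card_filter_le hlam hβ.2⟩

lemma lt_card_filter_of_lt_Fcount {α : ℝ} (hα0 : 0 < α) (hα1 : α < 1) (hα : α < Fcount T E) :
    T < (Finset.univ.filter (fun y => E y < 1 / α)).card := by
  by_contra! hcard
  exact hα.not_ge (Fcount_le ⟨hα0, hα1⟩ hcard)

lemma le_Fsmooth_of_lt_sum_bump {lam α₀ : ℝ} (hlam : 0 ≤ lam) (hA : ∃ α ∈ Set.Ioo (0 : ℝ) 1,
    (Finset.univ.filter (fun y => E y < 1 / α)).card ≤ T)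
    (hsum : T < ∑ y, bump (lam * (1 / α₀ - E y))) : α₀ ≤ Fsmooth T lam E := by
  obtain ⟨α, hα, hcard⟩ := hA
  refine le_csInf ⟨α, hα, sum_bump_le_of_card_filter_le hlam hcard⟩ fun β hβ => ?_
  by_contra! hβα₀
  exact hβ.2.not_gt
    (hsum.trans_le (sum_bump_mono E hlam (one_div_le_one_div_of_le hβ.1.1 hβα₀.le)))

lemma eventually_lt_Fsmooth (hA : ∃ α ∈ Set.Ioo (0 : ℝ) 1,
    (Finset.univ.filter (fun y => E y < 1 / α)).card ≤ T) {a : ℝ} (ha : a < Fcount T E) :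
    ∀ᶠ lam in atTop, a < Fsmooth T lam E := by
  rcases lt_or_ge a 0 with ha0 | ha0
  · exact Eventually.of_forall fun lam => ha0.trans_le (Fsmooth_nonneg T lam E)
  obtain ⟨α₀, haα₀, hα₀⟩ := exists_between ha
  have hcard := lt_card_filter_of_lt_Fcount (ha0.trans_lt haα₀)
    (hα₀.trans (Fcount_lt_one hA)) hα₀
  have hsum : ∀ᶠ lam in atTop, (T : ℝ) < ∑ y, bump (lam * (1 / α₀ - E y)) :=
    (tendsto_sum_bump E _).eventually (lt_mem_nhds (by exact_mod_cast hcard))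
  filter_upwards [hsum, eventually_ge_atTop 0] with lam hlam_sum hlam
  exact haα₀.trans_le (le_Fsmooth_of_lt_sum_bump hlam hA hlam_sum)

end Infima

theorem Fsmooth_le_Fcount_and_tendsto_general
    {𝒴 : Type*} [Fintype 𝒴] (T : ℕ)
    (E : 𝒴 → ℝ)
    (hhigh : (Finset.univ.filter (fun y => E y < 1)).card ≤ T)
    (hne : ∀ y, E y ≠ 1) :
    (∀ lam : ℝ, 0 < lam → Fsmooth T lam E ≤ Fcount T E) ∧
    Filter.Tendsto (fun lam : ℝ => Fsmooth T lam E) Filter.atTop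
      (nhds (Fcount T E)) := by
  have hA := exists_mem_Ioo_card_filter_le hne hhigh
  refine ⟨fun lam hlam => Fsmooth_le_Fcount hlam.le hA,
    tendsto_order.2 ⟨fun a ha => eventually_lt_Fsmooth hA ha, fun b hb => ?_⟩⟩
  filter_upwards [eventually_ge_atTop 0] with lam hlam
  exact (Fsmooth_le_Fcount hlam hA).trans_lt hb

theorem Fsmooth_le_Fcount_and_tendsto
    {𝒴 : Type*} [Fintype 𝒴] (T : ℕ) (hT1 : 1 ≤ T) (hT : T < Fintype.card 𝒴)
    (E : 𝒴 → ℝ) (hpos : ∀ y, 0 < E y)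
    (hlow : 1 ≤ (Finset.univ.filter (fun y => E y < 1)).card)
    (hhigh : (Finset.univ.filter (fun y => E y < 1)).card ≤ T)
    (hne : ∀ y, E y ≠ 1) :
    (∀ lam : ℝ, 0 < lam → Fsmooth T lam E ≤ Fcount T E) ∧
    Filter.Tendsto (fun lam : ℝ => Fsmooth T lam E) Filter.atTop
      (nhds (Fcount T E)) :=
  Fsmooth_le_Fcount_and_tendsto_general T E hhigh hne
end

section
/- Let 𝒴 be finite and 1 ≤ T < |𝒴|. Let K be a compact subset of { E ∈ (0,∞)^𝒴 : 1 ≤ #{y : E_y < 1} ≤ T and E_y ≠ 1 for all y }. Then F(E) = inf{ α ∈ (0,1) : #{y : E_y < 1/α} ≤ T } is 1-Lipschitz on K with respect to the sup norm: |F(E¹) − F(E²)| ≤ max_y |E¹_y − E²_y| for all E¹, E² ∈ K. -/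
/-!
Let `a` be the `(T+1)`-th smallest coordinate of `E`. Then `#{y | E y < t} ≤ T` holds exactly
for `t ≤ a`, so `F(E) = inf {α ∈ (0,1) | 1/α ≤ a} = 1/a` as soon as `a > 1`, which the
hypotheses on `K` guarantee. Order statistics move by at most the sup-distance of their
arguments, and `x ↦ 1/x` is 1-Lipschitz on `[1, ∞)`.
-/

open scoped Classical

open Finset

lemma card_filter_le_card_filter {ι : Type*} [Fintype ι] {p q : ι → Prop} [DecidablePred p]
    [DecidablePred q] (h : ∀ y, p y → q y) : #{y | p y} ≤ #{y | q y} :=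
  card_le_card (monotone_filter_right _ fun y _ => h y)

section OrderStatistic

variable {ι α : Type*} [Fintype ι] [LinearOrder α]

lemma exists_lt_card_filter_le (E : ι → α) {k : ℕ} (hk : k < Fintype.card ι) :
    ((univ.image E).filter fun x => k < #{y | E y ≤ x}).Nonempty := by
  have : Nonempty ι := Fintype.card_pos_iff.mp (by omega)
  obtain ⟨y₀, -, hy₀⟩ := univ.exists_max_image E univ_nonempty
  refine ⟨E y₀, mem_filter.mpr ⟨mem_image_of_mem E (mem_univ y₀), ?_⟩⟩
  rwa [filter_true_of_mem fun y _ => hy₀ y (mem_univ y), card_univ]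

/-- The `k`-th order statistic of `E`, counted from `0`: `orderStatistic E 0 hk` is the
minimum of `E`. -/
noncomputable def orderStatistic (E : ι → α) (k : ℕ) (hk : k < Fintype.card ι) : α :=
  ((univ.image E).filter fun x => k < #{y | E y ≤ x}).min' (exists_lt_card_filter_le E hk)

variable (E : ι → α) {k : ℕ} (hk : k < Fintype.card ι)

lemma exists_eq_orderStatistic : ∃ y, E y = orderStatistic E k hk := by
  simpa [orderStatistic] using (mem_filter.mp (min'_mem _ (exists_lt_card_filter_le E hk))).1

lemma lt_card_filter_le_orderStatistic : k < #{y | E y ≤ orderStatistic E k hk} :=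
  (mem_filter.mp (min'_mem _ (exists_lt_card_filter_le E hk))).2

lemma orderStatistic_le_of_lt_card {x : α} (hx : k < #{y | E y ≤ x}) :
    orderStatistic E k hk ≤ x := by
  obtain ⟨y₀, hy₀x, hy₀⟩ := exists_max_image ({y | E y ≤ x} : Finset ι) E
    (card_pos.mp (by omega))
  have hcard : k < #{y | E y ≤ E y₀} :=
    hx.trans_le (card_filter_le_card_filter fun y hy => hy₀ y (mem_filter.mpr ⟨mem_univ y, hy⟩))
  exact (min'_le _ _ (mem_filter.mpr ⟨mem_image_of_mem E (mem_univ y₀), hcard⟩)).trans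
    (mem_filter.mp hy₀x).2

lemma card_filter_lt_orderStatistic_le : #{y | E y < orderStatistic E k hk} ≤ k := by
  by_contra! hlt
  obtain ⟨y₀, hy₀a, hy₀⟩ := exists_max_image ({y | E y < orderStatistic E k hk} : Finset ι) E
    (card_pos.mp (by omega))
  have hcard : k < #{y | E y ≤ E y₀} :=
    hlt.trans_le (card_filter_le_card_filter fun y hy => hy₀ y (mem_filter.mpr ⟨mem_univ y, hy⟩))
  exact (mem_filter.mp hy₀a).2.not_ge (orderStatistic_le_of_lt_card E hk hcard)

lemma card_filter_lt_le_iff (t : α) : #{y | E y < t} ≤ k ↔ t ≤ orderStatistic E k hk := by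
  constructor
  · intro hcard
    by_contra! hlt
    have := card_filter_le_card_filter fun y (hy : E y ≤ orderStatistic E k hk) => hy.trans_lt hlt
    have := lt_card_filter_le_orderStatistic E hk
    omega
  · intro hle
    exact (card_filter_le_card_filter fun y (hy : E y < t) => hy.trans_le hle).trans
      (card_filter_lt_orderStatistic_le E hk)

lemma orderStatistic_le_of_le_comp {E₁ E₂ : ι → α} {f : α → α} (hf : Monotone f)
    (h : ∀ y, E₁ y ≤ f (E₂ y)) : orderStatistic E₁ k hk ≤ f (orderStatistic E₂ k hk) :=
  orderStatistic_le_of_lt_card E₁ hk <| (lt_card_filter_le_orderStatistic E₂ hk).trans_le <|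
    card_filter_le_card_filter fun y hy => (h y).trans (hf hy)

end OrderStatistic

lemma abs_orderStatistic_sub_le {ι α : Type*} [Fintype ι] [AddCommGroup α] [LinearOrder α]
    [IsOrderedAddMonoid α] {E₁ E₂ : ι → α} {k : ℕ} (hk : k < Fintype.card ι) {d : α}
    (h : ∀ y, |E₁ y - E₂ y| ≤ d) :
    |orderStatistic E₁ k hk - orderStatistic E₂ k hk| ≤ d := by
  refine abs_sub_le_iff.mpr ⟨?_, ?_⟩ <;> rw [sub_le_iff_le_add'] <;>
    refine orderStatistic_le_of_le_comp hk (f := (· + d)) add_left_mono fun y => ?_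
  · exact sub_le_iff_le_add'.mp (abs_sub_le_iff.mp (h y)).1
  · exact sub_le_iff_le_add'.mp (abs_sub_le_iff.mp (h y)).2

lemma abs_inv_sub_inv_le_abs_sub {a b : ℝ} (ha : 1 ≤ a) (hb : 1 ≤ b) :
    |a⁻¹ - b⁻¹| ≤ |a - b| := by
  have ha₀ : 0 < a := one_pos.trans_le ha
  have hb₀ : 0 < b := one_pos.trans_le hb
  rw [inv_sub_inv ha₀.ne' hb₀.ne', abs_div, abs_of_pos (mul_pos ha₀ hb₀), abs_sub_comm]
  exact div_le_self (abs_nonneg _) (one_le_mul_of_one_le_of_one_le ha hb)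

section Fcount

variable {𝒴 : Type*} [Fintype 𝒴] {T : ℕ} (hT : T < Fintype.card 𝒴) {E : 𝒴 → ℝ}

lemma one_lt_orderStatistic (hcard : #{y | E y < 1} ≤ T) (hne : ∀ y, E y ≠ 1) :
    1 < orderStatistic E T hT := by
  obtain ⟨y, hy⟩ := exists_eq_orderStatistic E hT
  exact lt_of_le_of_ne ((card_filter_lt_le_iff E hT 1).mp hcard) (hy ▸ (hne y).symm)

lemma Fcount_eq_inv_orderStatistic (h : 1 < orderStatistic E T hT) :
    Fcount T E = (orderStatistic E T hT)⁻¹ := by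
  have hpos : 0 < orderStatistic E T hT := one_pos.trans h
  have hset : {α : ℝ | α ∈ Set.Ioo (0 : ℝ) 1 ∧ #{y | E y < 1 / α} ≤ T} =
      Set.Ico (orderStatistic E T hT)⁻¹ 1 := by
    ext α
    simp only [Set.mem_ofPred_eq, Set.mem_Ioo, Set.mem_Ico, one_div, card_filter_lt_le_iff E hT]
    constructor
    · rintro ⟨⟨hα, hα1⟩, hle⟩
      exact ⟨(inv_le_comm₀ hα hpos).mp hle, hα1⟩
    · rintro ⟨hle, hα1⟩
      have hα : 0 < α := (inv_pos.mpr hpos).trans_le hle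
      exact ⟨⟨hα, hα1⟩, (inv_le_comm₀ hα hpos).mpr hle⟩
  rw [Fcount, hset, csInf_Ico (inv_lt_one_of_one_lt₀ h)]

end Fcount

theorem Fcount_one_lipschitz_on_compact_general
    {𝒴 : Type*} [Fintype 𝒴] [Nonempty 𝒴]
    (T : ℕ) (hT : T < Fintype.card 𝒴)
    (K : Set (𝒴 → ℝ))
    (hKsub : K ⊆ {E : 𝒴 → ℝ | (∀ y, 0 < E y) ∧
      1 ≤ (Finset.univ.filter (fun y => E y < 1)).card ∧
      (Finset.univ.filter (fun y => E y < 1)).card ≤ T ∧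
      ∀ y, E y ≠ 1}) :
    ∀ E₁ ∈ K, ∀ E₂ ∈ K,
      |Fcount T E₁ - Fcount T E₂| ≤
        Finset.univ.sup' Finset.univ_nonempty (fun y => |E₁ y - E₂ y|) := by
  intro E₁ hE₁ E₂ hE₂
  obtain ⟨-, -, hcard₁, hne₁⟩ := hKsub hE₁
  obtain ⟨-, -, hcard₂, hne₂⟩ := hKsub hE₂
  have h₁ := one_lt_orderStatistic hT hcard₁ hne₁
  have h₂ := one_lt_orderStatistic hT hcard₂ hne₂
  rw [Fcount_eq_inv_orderStatistic hT h₁, Fcount_eq_inv_orderStatistic hT h₂]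
  exact (abs_inv_sub_inv_le_abs_sub h₁.le h₂.le).trans
    (abs_orderStatistic_sub_le hT fun y => le_sup' (fun y => |E₁ y - E₂ y|) (mem_univ y))

theorem Fcount_one_lipschitz_on_compact
    {𝒴 : Type*} [Fintype 𝒴] [Nonempty 𝒴]
    (T : ℕ) (hT1 : 1 ≤ T) (hT : T < Fintype.card 𝒴)
    (K : Set (𝒴 → ℝ)) (hK : IsCompact K)
    (hKsub : K ⊆ {E : 𝒴 → ℝ | (∀ y, 0 < E y) ∧
      1 ≤ (Finset.univ.filter (fun y => E y < 1)).card ∧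
      (Finset.univ.filter (fun y => E y < 1)).card ≤ T ∧
      ∀ y, E y ≠ 1}) :
    ∀ E₁ ∈ K, ∀ E₂ ∈ K,
      |Fcount T E₁ - Fcount T E₂| ≤
        Finset.univ.sup' Finset.univ_nonempty (fun y => |E₁ y - E₂ y|) :=
  Fcount_one_lipschitz_on_compact_general T hT K hKsub
end

section
/- Let Z₁, …, Zₙ be i.i.d. random variables with values in [S_min, S_max], 0 < S_min ≤ S_max, and let μ = 𝔼[Z₁] > 0. Fix j ∈ {1,…,n} and a value s ∈ [S_min, S_max]. Then for any δ > 0, with probability at least 1 − δ, | s / ((1/n)(Σ_{i≠j} Zᵢ + s)) − s/μ | ≤ S_max · (√(log(2/δ)/(2n)) + 2/n) / (μ · (S_min/S_max − 1/n)), provided n > S_max/S_min. -/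
/-!
On the event where Hoeffding's inequality holds for the full empirical mean `(1/n) ∑ Zᵢ`, the
leave-one-out denominator `A = (1/n)(∑_{i ≠ j} Zᵢ + s)` differs from that mean only by
`(s - Z_j)/n`, so `|A - μ| ≤ S_max (√(log(2/δ)/(2n)) + 2/n)`. Since `A ≥ S_min`, the identity
`s/A - s/μ = s (μ - A)/(A μ)` turns this into the stated bound on the ratio.
-/

open MeasureTheory ProbabilityTheory Real Finset

section Hoeffding

variable {Ω ι : Type*} {mΩ : MeasurableSpace Ω} {P : Measure Ω} [IsProbabilityMeasure P]
  {X : ι → Ω → ℝ} {a b : ℝ}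

lemma measureReal_le_abs_sum_sub_integral_le (hindep : iIndepFun X P)
    (hmeas : ∀ i, AEMeasurable (X i) P) (hb : ∀ i, ∀ᵐ ω ∂P, X i ω ∈ Set.Icc a b)
    (s : Finset ι) {ε : ℝ} (hε : 0 ≤ ε) :
    P.real {ω | ε ≤ |∑ i ∈ s, (X i ω - P[X i])|} ≤
      2 * exp (-ε ^ 2 / (2 * (#s * ((b - a) / 2) ^ 2))) := by
  have hcentered : iIndepFun (fun i ω ↦ X i ω - P[X i]) P :=
    hindep.comp (fun i y ↦ y - ∫ ω, X i ω ∂P) fun _ ↦ measurable_id.sub_const _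
  have hsum := HasSubgaussianMGF.sum_of_iIndepFun hcentered (s := s)
    fun i _ ↦ hasSubgaussianMGF_of_mem_Icc (hmeas i) (hb i)
  have hvar : ((∑ i ∈ s, (‖b - a‖₊ / 2) ^ 2 : NNReal) : ℝ) = #s * ((b - a) / 2) ^ 2 := by
    simp [div_pow]
  calc P.real {ω | ε ≤ |∑ i ∈ s, (X i ω - P[X i])|}
      ≤ P.real ({ω | ε ≤ ∑ i ∈ s, (X i ω - P[X i])} ∪
          {ω | ε ≤ -∑ i ∈ s, (X i ω - P[X i])}) :=
        measureReal_mono fun _ (hω : ε ≤ |_|) ↦ le_abs.mp hω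
    _ ≤ _ := measureReal_union_le _ _
    _ ≤ _ := add_le_add (hsum.measure_ge_le hε) (hsum.neg.measure_ge_le hε)
    _ = _ := by rw [hvar]; ring

lemma one_sub_le_measureReal_abs_mean_sub_le (hindep : iIndepFun X P)
    (hmeas : ∀ i, AEMeasurable (X i) P) (hb : ∀ i, ∀ᵐ ω ∂P, X i ω ∈ Set.Icc a b)
    (hab : a < b) {s : Finset ι} (hs : s.Nonempty) {m : ℝ} (hm : ∀ i ∈ s, P[X i] = m)
    {δ : ℝ} (hδ : 0 < δ) :
    1 - δ ≤ P.real {ω | |(∑ i ∈ s, X i ω) / #s - m| ≤ (b - a) * √(log (2 / δ) / (2 * #s))} := by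
  rcases le_or_gt 1 δ with hδ1 | hδ1
  · exact (sub_nonpos.mpr hδ1).trans measureReal_nonneg
  set n : ℝ := (#s : ℝ)
  set t := (b - a) * √(log (2 / δ) / (2 * n))
  have hn : 0 < n := by simpa [n] using hs.card_pos
  have hlog : 0 ≤ log (2 / δ) := log_nonneg (by rw [le_div_iff₀ hδ]; linarith)
  have htail := measureReal_le_abs_sum_sub_integral_le hindep hmeas hb s
    (ε := n * t) (by have := sub_pos.mpr hab; positivity)
  have hconf : 2 * exp (-(n * t) ^ 2 / (2 * (n * ((b - a) / 2) ^ 2))) = δ := by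
    have hexponent : (n * t) ^ 2 / (2 * (n * ((b - a) / 2) ^ 2)) = log (2 / δ) := by
      rw [mul_pow, mul_pow, sq_sqrt (by positivity)]
      field_simp [(sub_pos.mpr hab).ne']
    rw [neg_div, hexponent, exp_neg, exp_log (by positivity)]
    field_simp
  have hcover : Set.univ ⊆ {ω | |(∑ i ∈ s, X i ω) / n - m| ≤ t} ∪
      {ω | n * t ≤ |∑ i ∈ s, (X i ω - P[X i])|} := by
    intro ω _
    by_cases hω : |(∑ i ∈ s, X i ω) / n - m| ≤ t
    · exact Or.inl hω
    · have hsum : ∑ i ∈ s, (X i ω - P[X i]) = n * ((∑ i ∈ s, X i ω) / n - m) := by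
        rw [sum_sub_distrib, sum_congr rfl hm, sum_const, nsmul_eq_mul]
        field_simp
        ring
      right
      rw [Set.mem_ofPred_eq, hsum, abs_mul, abs_of_pos hn]
      exact mul_le_mul_of_nonneg_left (not_le.mp hω).le hn.le
  calc 1 - δ = P.real Set.univ - δ := by simp
    _ ≤ _ := by
      linarith [(measureReal_mono (μ := P) hcover).trans (measureReal_union_le _ _)]

end Hoeffding

lemma abs_div_sub_div_le {s S A L μ η : ℝ} (hs : 0 ≤ s) (hsS : s ≤ S) (hL : 0 < L)
    (hLA : L ≤ A) (hμ : 0 < μ) (hAμ : |A - μ| ≤ η) :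
    |s / A - s / μ| ≤ S * η / (μ * L) := by
  have hA : 0 < A := hL.trans_le hLA
  have hnum : |s * μ - A * s| = s * |A - μ| := by
    rw [show s * μ - A * s = -(s * (A - μ)) by ring, abs_neg, abs_mul, abs_of_nonneg hs]
  rw [div_sub_div _ _ hA.ne' hμ.ne', abs_div, abs_of_pos (mul_pos hA hμ), hnum]
  have hη : 0 ≤ η := (abs_nonneg _).trans hAμ
  exact div_le_div₀ (mul_nonneg (hs.trans hsS) hη)
    (mul_le_mul hsS hAμ (abs_nonneg _) (hs.trans hsS)) (by positivity)
    (by rw [mul_comm A]; exact mul_le_mul_of_nonneg_left hLA hμ.le)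

section LeaveOneOut

variable {ι : Type*} [Fintype ι] [DecidableEq ι]

lemma leaveOneOut_mean_sub_mean (z : ι → ℝ) (j : ι) (s : ℝ) :
    1 / (Fintype.card ι : ℝ) * (∑ i ∈ univ.erase j, z i + s) - (∑ i, z i) / Fintype.card ι =
      (s - z j) / Fintype.card ι := by
  rw [← sum_erase_add _ _ (mem_univ j)]
  ring

variable {z : ι → ℝ} {j : ι} {s : ℝ}

lemma le_leaveOneOut_mean {c : ℝ} (hz : ∀ i, c ≤ z i) (hs : c ≤ s) :
    c ≤ 1 / (Fintype.card ι : ℝ) * (∑ i ∈ univ.erase j, z i + s) := by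
  have hcard : (0 : ℝ) < Fintype.card ι := Nat.cast_pos.mpr (Fintype.card_pos_iff.mpr ⟨j⟩)
  have hsum : ∑ i ∈ univ.erase j, z i + s = ∑ i, Function.update z j s i := by
    rw [sum_update_of_mem (mem_univ j), sdiff_singleton_eq_erase, add_comm]
  have hlower := card_nsmul_le_sum univ (Function.update z j s) c fun i _ ↦ by
    rcases eq_or_ne i j with rfl | hij
    · simpa using hs
    · simpa [hij] using hz i
  rw [hsum, one_div_mul_eq_div, le_div_iff₀ hcard]
  simpa [mul_comm] using hlower

lemma abs_leaveOneOut_ratio_sub_le {Smin Smax μ r : ℝ} (hmin : 0 < Smin)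
    (hz : ∀ i, z i ∈ Set.Icc Smin Smax) (hs : s ∈ Set.Icc Smin Smax)
    (hn : Smax / Smin < Fintype.card ι) (hμ : 0 < μ)
    (hmean : |(∑ i, z i) / Fintype.card ι - μ| ≤ Smax * r) :
    |s / (1 / (Fintype.card ι : ℝ) * (∑ i ∈ univ.erase j, z i + s)) - s / μ| ≤
      Smax * (r + 2 / Fintype.card ι) / (μ * (Smin / Smax - 1 / Fintype.card ι)) := by
  set n : ℝ := (Fintype.card ι : ℝ)
  have hn0 : 0 < n := Nat.cast_pos.mpr (Fintype.card_pos_iff.mpr ⟨j⟩)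
  have hSmax : 0 < Smax := hmin.trans_le (hs.1.trans hs.2)
  have hL : 0 < Smin - Smax / n := by
    rw [sub_pos, div_lt_iff₀ hn0]
    rw [div_lt_iff₀ hmin] at hn
    linarith
  have hLA : Smin - Smax / n ≤ 1 / n * (∑ i ∈ univ.erase j, z i + s) :=
    (sub_le_self _ (by positivity)).trans (le_leaveOneOut_mean (fun i ↦ (hz i).1) hs.1)
  have hjump : |(s - z j) / n| ≤ 2 * Smax / n := by
    rw [abs_div, abs_of_pos hn0]
    gcongr
    linarith [abs_sub_le_of_nonneg_of_le (hmin.le.trans hs.1) hs.2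
      (hmin.le.trans (hz j).1) (hz j).2]
  have hdev : |1 / n * (∑ i ∈ univ.erase j, z i + s) - μ| ≤ Smax * (r + 2 / n) :=
    calc _ = |(s - z j) / n + ((∑ i, z i) / n - μ)| := by
          congr 1
          linarith [leaveOneOut_mean_sub_mean z j s]
      _ ≤ |(s - z j) / n| + |(∑ i, z i) / n - μ| := abs_add_le _ _
      _ ≤ 2 * Smax / n + Smax * r := add_le_add hjump hmean
      _ = Smax * (r + 2 / n) := by ring
  calc _ ≤ Smax * (Smax * (r + 2 / n)) / (μ * (Smin - Smax / n)) :=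
        abs_div_sub_div_le (hmin.le.trans hs.1) hs.2 hL hLA hμ hdev
    _ = _ := by field_simp

end LeaveOneOut

theorem leave_one_out_ratio_concentration_general
    {Ω : Type*} [MeasureSpace Ω] [IsProbabilityMeasure (ℙ : Measure Ω)]
    (n : ℕ) (hn0 : 0 < n) (Z : Fin n → Ω → ℝ) (hmeas : ∀ i, Measurable (Z i))
    (hindep : iIndepFun Z ℙ)
    (hident : ∀ i j, Measure.map (Z i) ℙ = Measure.map (Z j) ℙ)
    (Smin Smax : ℝ) (hmin : 0 < Smin)
    (hbdd : ∀ i ω, Z i ω ∈ Set.Icc Smin Smax)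
    (hn : Smax / Smin < n)
    (μ : ℝ) (hμ : μ = ∫ ω, Z ⟨0, hn0⟩ ω)
    (j : Fin n) (s : ℝ) (hs : s ∈ Set.Icc Smin Smax)
    (δ : ℝ) (hδ : 0 < δ) :
    1 - δ ≤ (ℙ {ω |
      |s / ((1 / (n : ℝ)) * ((∑ i ∈ Finset.univ.erase j, Z i ω) + s)) - s / μ| ≤
        Smax * (Real.sqrt (Real.log (2 / δ) / (2 * n)) + 2 / n) /
          (μ * (Smin / Smax - 1 / n))}).toReal := by
  have hSmax : 0 < Smax := hmin.trans_le (hs.1.trans hs.2)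
  have hmean : ∀ i, ∫ ω, Z i ω = μ := fun i ↦ hμ ▸
    IdentDistrib.integral_eq ⟨(hmeas i).aemeasurable, (hmeas _).aemeasurable, hident i _⟩
  have hμpos : 0 < μ := by
    obtain ⟨ω, hω⟩ := exists_le_integral (Integrable.of_mem_Icc (μ := ℙ) Smin Smax
      (hmeas ⟨0, hn0⟩).aemeasurable (ae_of_all _ (hbdd _)))
    exact hmin.trans_le ((hbdd _ ω).1.trans (hμ ▸ hω))
  -- Hoeffding on `[0, Smax]`, the range whose width is the `Smax` of the bound.
  have hconc := one_sub_le_measureReal_abs_mean_sub_le (a := 0) (b := Smax) hindep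
    (fun i ↦ (hmeas i).aemeasurable)
    (fun i ↦ ae_of_all _ fun ω ↦ ⟨hmin.le.trans (hbdd i ω).1, (hbdd i ω).2⟩)
    hSmax ⟨j, mem_univ j⟩ (fun i _ ↦ hmean i) hδ
  refine hconc.trans (measureReal_mono fun ω hω ↦ ?_)
  simpa using abs_leaveOneOut_ratio_sub_le (j := j) hmin (hbdd · ω) hs (by simpa using hn) hμpos
    (by simpa using hω)

theorem leave_one_out_ratio_concentration
    {Ω : Type*} [MeasureSpace Ω] [IsProbabilityMeasure (ℙ : Measure Ω)]
    (n : ℕ) (hn0 : 0 < n) (Z : Fin n → Ω → ℝ) (hmeas : ∀ i, Measurable (Z i))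
    (hindep : iIndepFun Z ℙ)
    (hident : ∀ i j, Measure.map (Z i) ℙ = Measure.map (Z j) ℙ)
    (Smin Smax : ℝ) (hmin : 0 < Smin) (hmm : Smin ≤ Smax)
    (hbdd : ∀ i ω, Z i ω ∈ Set.Icc Smin Smax)
    (hn : Smax / Smin < n)
    (μ : ℝ) (hμ : μ = ∫ ω, Z ⟨0, hn0⟩ ω)
    (j : Fin n) (s : ℝ) (hs : s ∈ Set.Icc Smin Smax)
    (δ : ℝ) (hδ : 0 < δ) :
    1 - δ ≤ (ℙ {ω |
      |s / ((1 / (n : ℝ)) * ((∑ i ∈ Finset.univ.erase j, Z i ω) + s)) - s / μ| ≤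
        Smax * (Real.sqrt (Real.log (2 / δ) / (2 * n)) + 2 / n) /
          (μ * (Smin / Smax - 1 / n))}).toReal :=
  leave_one_out_ratio_concentration_general n hn0 Z hmeas hindep hident Smin Smax hmin hbdd hn μ hμ
    j s hs δ hδ
end

section
/- Let Δ be a real random variable such that for all t ≥ 0, ℙ(|Δ| ≥ t) ≤ 2·exp(−2n·(a·t − 2/n)²) for a constant a > 0 (the bound interpreted as trivially true when a·t ≤ 2/n). Then Var(Δ) ≤ 𝔼[Δ²] ≤ (2/a)² · ( (1/(4n))·e^{−8/n} + (2/n)·√(π/(2n)) ); in particular Var(Δ) = O(1/n). -/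
/-!
Write `𝔼[Δ²] = ∫₀^∞ 2t ℙ(|Δ| ≥ t) dt`. Below `c = 2/(na)` bound the probability by `1`; above it
the hypothesis is a Gaussian tail `2 exp(-k (t - c)²)` with `k = 2na²`, and the substitution
`s = t - c` splits `∫ t e^{-k(t-c)²}` into `∫ s e^{-ks²} = 1/(2k)` and a half Gaussian integral.
This gives `𝔼[Δ²] ≤ 4/(na²) · (1/n + 1/4 + √(π/(2n)))`, which is at most the stated constant
because `1/n + (1 - e^{-8/n})/4 ≤ √(π/(2n))`.
-/

open MeasureTheory ProbabilityTheory
open Real Set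
open scoped ENNReal

lemma setLIntegral_Ioi_comp_add_right (f : ℝ → ℝ≥0∞) (c : ℝ) :
    ∫⁻ t in Ioi c, f t = ∫⁻ s in Ioi 0, f (s + c) := by
  have hpre : (· + c) ⁻¹' Ioi c = Ioi 0 := by ext; simp
  rw [← (measurePreserving_add_right volume c).setLIntegral_comp_preimage_emb
    (MeasurableEquiv.addRight c).measurableEmbedding, hpre]

lemma integral_Ioi_mul_exp_neg_mul_sq {b : ℝ} (hb : 0 < b) :
    ∫ s in Ioi 0, s * exp (-b * s ^ 2) = 1 / (2 * b) := by
  have h := integral_rpow_mul_exp_neg_mul_rpow two_pos (by norm_num : (-1 : ℝ) < 1) hb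
  norm_num [rpow_neg_one] at h
  simpa [neg_mul, mul_comm] using h

lemma lintegral_Ioi_mul_exp_neg_mul_sub_sq {b : ℝ} (hb : 0 < b) {c : ℝ} (hc : 0 ≤ c) :
    ∫⁻ t in Ioi c, ENNReal.ofReal (t * exp (-b * (t - c) ^ 2)) =
      ENNReal.ofReal (1 / (2 * b) + c * √(π / b) / 2) := by
  have hint : Integrable (fun s => s * exp (-b * s ^ 2) + c * exp (-b * s ^ 2)) :=
    (integrable_mul_exp_neg_mul_sq hb).add ((integrable_exp_neg_mul_sq hb).const_mul c)
  have hnonneg :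
      0 ≤ᵐ[volume.restrict (Ioi 0)] fun s => s * exp (-b * s ^ 2) + c * exp (-b * s ^ 2) :=
    (ae_restrict_iff' measurableSet_Ioi).mpr <| .of_forall fun s (hs : 0 < s) => by positivity
  rw [setLIntegral_Ioi_comp_add_right]
  simp_rw [add_sub_cancel_right, add_mul]
  rw [← ofReal_integral_eq_lintegral_ofReal hint.integrableOn hnonneg,
    integral_add (integrable_mul_exp_neg_mul_sq hb).integrableOn
      ((integrable_exp_neg_mul_sq hb).const_mul c).integrableOn,
    integral_const_mul, integral_Ioi_mul_exp_neg_mul_sq hb, integral_gaussian_Ioi, mul_div_assoc]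

lemma lintegral_ofReal_sq_eq_lintegral_meas_le_mul {α : Type*} [MeasurableSpace α]
    (μ : Measure α) {X : α → ℝ} (hX : AEMeasurable X μ) :
    ∫⁻ ω, ENNReal.ofReal (X ω ^ 2) ∂μ =
      ∫⁻ t in Ioi 0, μ {ω | t ≤ |X ω|} * ENNReal.ofReal (2 * t) := by
  have h := lintegral_rpow_eq_lintegral_meas_le_mul μ (.of_forall fun ω => abs_nonneg (X ω))
    hX.abs two_pos
  norm_num [rpow_two, sq_abs] at h
  simp_rw [h, ENNReal.ofReal_mul zero_le_two, mul_left_comm _ (ENNReal.ofReal 2)]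
  rw [lintegral_const_mul' _ _ ENNReal.ofReal_ne_top, ENNReal.ofReal_ofNat]

lemma evariance_le_lintegral_ofReal_sq {Ω : Type*} [MeasurableSpace Ω] {μ : Measure Ω}
    [IsProbabilityMeasure μ] {X : Ω → ℝ} (hX : AEStronglyMeasurable X μ) :
    evariance X μ ≤ ∫⁻ ω, ENNReal.ofReal (X ω ^ 2) ∂μ := by
  rw [evariance_def' hX]
  refine tsub_le_self.trans_eq (lintegral_congr fun ω => ?_)
  rw [Real.enorm_eq_ofReal_abs, ← ENNReal.ofReal_pow (abs_nonneg _), sq_abs]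

theorem lintegral_ofReal_sq_le_of_meas_le_exp_neg_mul_sub_sq {Ω : Type*} [MeasurableSpace Ω]
    {μ : Measure Ω} [IsProbabilityMeasure μ] {X : Ω → ℝ} (hX : AEMeasurable X μ)
    {b c C : ℝ} (hb : 0 < b) (hc : 0 ≤ c) (hC : 0 ≤ C)
    (htail : ∀ t, c < t → μ {ω | t ≤ |X ω|} ≤ ENNReal.ofReal (C * exp (-b * (t - c) ^ 2))) :
    ∫⁻ ω, ENNReal.ofReal (X ω ^ 2) ∂μ ≤ ENNReal.ofReal (c ^ 2 + C * (1 / b + c * √(π / b))) := by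
  have hnear : ∫⁻ t in Ioc 0 c, μ {ω | t ≤ |X ω|} * ENNReal.ofReal (2 * t) ≤
      ENNReal.ofReal (c ^ 2) := calc
    _ ≤ ∫⁻ t in Ioc 0 c, ENNReal.ofReal (2 * t) :=
      lintegral_mono fun t => mul_le_of_le_one_left zero_le prob_le_one
    _ = ENNReal.ofReal (c ^ 2) := by
      rw [← ofReal_integral_eq_lintegral_ofReal
          (by fun_prop : Continuous fun t : ℝ => 2 * t).integrableOn_Ioc
          ((ae_restrict_iff' measurableSet_Ioc).mpr <| .of_forall fun t ht => by
            have : 0 < t := ht.1; positivity),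
        ← intervalIntegral.integral_of_le hc, intervalIntegral.integral_const_mul, integral_id]
      ring_nf
  have hfar : ∫⁻ t in Ioi c, μ {ω | t ≤ |X ω|} * ENNReal.ofReal (2 * t) ≤
      ENNReal.ofReal (C * (1 / b + c * √(π / b))) := calc
    _ ≤ ∫⁻ t in Ioi c, ENNReal.ofReal (2 * C) * ENNReal.ofReal (t * exp (-b * (t - c) ^ 2)) := by
      refine setLIntegral_mono' measurableSet_Ioi fun t (ht : c < t) => ?_
      have : 0 ≤ t := hc.trans ht.le
      grw [htail t ht]
      rw [← ENNReal.ofReal_mul (by positivity), ← ENNReal.ofReal_mul (by positivity)]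
      exact (congrArg ENNReal.ofReal (by ring)).le
    _ = ENNReal.ofReal (C * (1 / b + c * √(π / b))) := by
      rw [lintegral_const_mul' _ _ ENNReal.ofReal_ne_top,
        lintegral_Ioi_mul_exp_neg_mul_sub_sq hb hc, ← ENNReal.ofReal_mul (by positivity)]
      congr 1
      field_simp
  rw [lintegral_ofReal_sq_eq_lintegral_meas_le_mul μ hX, ← Ioc_union_Ioi_eq_Ioi hc,
    lintegral_union measurableSet_Ioi (Ioc_disjoint_Ioi le_rfl),
    ENNReal.ofReal_add (sq_nonneg c) (by positivity)]
  exact add_le_add hnear hfar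

/- Nearly tight at `n = 1` (`1.2499… ≤ 1.2533…`), hence the six-digit bound on `π` for small `n`. -/
lemma inv_add_one_sub_exp_div_four_le_sqrt {n : ℕ} (hn : 0 < n) :
    (n : ℝ)⁻¹ + (1 - exp (-8 / n)) / 4 ≤ √(π / (2 * n)) := by
  have hn' : (0 : ℝ) < n := Nat.cast_pos.mpr hn
  rcases le_or_gt 6 n with h6 | h6
  · have h6' : (6 : ℝ) ≤ n := by exact_mod_cast h6
    have hexp : 1 - exp (-8 / n) ≤ 8 / n := by
      linarith [add_one_le_exp (-8 / (n : ℝ)), neg_div (n : ℝ) 8]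
    calc (n : ℝ)⁻¹ + (1 - exp (-8 / n)) / 4 ≤ (n : ℝ)⁻¹ + 8 / n / 4 := by linarith
      _ = 3 / n := by ring
      _ ≤ √(π / (2 * n)) := by
          rw [le_sqrt (by positivity) (by positivity), div_pow,
            div_le_div_iff₀ (by positivity) (by positivity)]
          nlinarith [pi_gt_three]
  · calc (n : ℝ)⁻¹ + (1 - exp (-8 / n)) / 4 ≤ (n : ℝ)⁻¹ + 1 / 4 := by
          linarith [exp_pos (-8 / (n : ℝ))]
      _ ≤ √(π / (2 * n)) := by
          rw [le_sqrt (by positivity) (by positivity)]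
          interval_cases n <;> norm_num <;> nlinarith [pi_gt_d6]

theorem variance_tail_bound
    {Ω : Type*} [MeasureSpace Ω] [IsProbabilityMeasure (ℙ : Measure Ω)]
    (Δ : Ω → ℝ) (hmeas : Measurable Δ)
    (n : ℕ) (hn : 0 < n) (a : ℝ) (ha : 0 < a)
    (htail : ∀ t : ℝ, 0 ≤ t → 2 / (n : ℝ) < a * t →
      (ℙ {ω | t ≤ |Δ ω|}).toReal ≤
        2 * Real.exp (-2 * n * (a * t - 2 / n) ^ 2)) :
    evariance Δ ℙ ≤ (∫⁻ ω, ENNReal.ofReal (Δ ω ^ 2)) ∧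
    (∫⁻ ω, ENNReal.ofReal (Δ ω ^ 2)) ≤
      ENNReal.ofReal ((2 / a) ^ 2 *
        ((1 / (4 * n)) * Real.exp (-8 / n) +
          (2 / n) * Real.sqrt (Real.pi / (2 * n)))) := by
  have hn' : (0 : ℝ) < n := Nat.cast_pos.mpr hn
  refine ⟨evariance_le_lintegral_ofReal_sq hmeas.aestronglyMeasurable, ?_⟩
  set c := 2 / (n * a) with hc
  have hc0 : 0 < c := by positivity
  have hac : a * c = 2 / n := by rw [hc]; field_simp
  have hgauss : ∀ t, c < t →
      ℙ {ω | t ≤ |Δ ω|} ≤ ENNReal.ofReal (2 * exp (-(2 * n * a ^ 2) * (t - c) ^ 2)) := by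
    intro t ht
    have hat : 2 / (n : ℝ) < a * t := hac ▸ mul_lt_mul_of_pos_left ht ha
    rw [ENNReal.le_ofReal_iff_toReal_le (measure_ne_top _ _) (by positivity)]
    convert htail t (hc0.trans ht).le hat using 3
    rw [← hac]; ring
  refine (lintegral_ofReal_sq_le_of_meas_le_exp_neg_mul_sub_sq hmeas.aemeasurable
    (by positivity) (by positivity) zero_le_two hgauss).trans (ENNReal.ofReal_le_ofReal ?_)
  have hsqrt : √(π / (2 * n * a ^ 2)) = √(π / (2 * n)) / a := by
    rw [← div_div, sqrt_div' _ (sq_nonneg a), sqrt_sq ha.le]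
  have hkey := inv_add_one_sub_exp_div_four_le_sqrt hn
  rw [hsqrt]
  calc c ^ 2 + 2 * (1 / (2 * n * a ^ 2) + c * (√(π / (2 * n)) / a))
      = 4 / (n * a ^ 2) * ((n : ℝ)⁻¹ + 1 / 4 + √(π / (2 * n))) := by
        rw [hc]; field_simp; ring
    _ ≤ 4 / (n * a ^ 2) * (exp (-8 / n) / 4 + 2 * √(π / (2 * n))) := by
        refine mul_le_mul_of_nonneg_left ?_ (by positivity); linarith
    _ = _ := by field_simp; ring
end
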